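/- Let G be an acyclic digraph with distinct vertices s_1,t_1,s_2,t_2, and let H be obtained from G by adding new vertices u_1,u_2 and arcs t_1u_1, u_1s_1, t_2u_2, u_2s_2. Then H contains, as an induced subdigraph, the disjoint union of two directed cycles with no arcs between them if and only if G contains directed paths P_1 from s_1 to t_1 and P_2 from s_2 to t_2 such that the subdigraph of G induced by V(P_1) ∪ V(P_2) is exactly the disjoint union of P_1 and P_2. -/

import Mathlib

/-!
Since `G` is acyclic, each of the two induced cycles of `H` passes through `u₁` or `u₂`, and
being disjoint they pass through different ones, each exactly once. Read from the vertex after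
`uᵢ`, the cycle through `uᵢ` is a directed `(sᵢ, tᵢ)`-path `Pᵢ` of `G` closed up by `uᵢ`. For
cycles of this shape the arcs of `H` among their vertices are the arcs of `G` among the vertices
of `P₁` and `P₂` plus the four arcs at `u₁` and `u₂`; so the cycles are induced exactly when the
paths are, which gives both directions.
-/

/-- A directed cycle in the digraph `G`: vertices `v 0, …, v (n-1)` (all distinct),
`v n = v 0`, with arcs `v i → v (i+1)` for all `i < n`, and `n ≥ 2`. -/
def IsDiCycle {V : Type*} (G : V → V → Prop) (n : ℕ) (v : ℕ → V) : Prop :=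
  2 ≤ n ∧ v n = v 0 ∧ (∀ i < n, ∀ j < n, v i = v j → i = j) ∧ ∀ i < n, G (v i) (v (i + 1))

/-- The digraph `H` obtained from `G` by adding two new vertices `u₁ = inr 0` and
`u₂ = inr 1` and the arcs `t₁ → u₁`, `u₁ → s₁`, `t₂ → u₂`, `u₂ → s₂`. -/
def Hrel {V : Type*} (G : V → V → Prop) (s₁ t₁ s₂ t₂ : V) :
    (V ⊕ Fin 2) → (V ⊕ Fin 2) → Prop := fun p q =>
  match p, q with
  | Sum.inl a, Sum.inl b => G a b
  | Sum.inl a, Sum.inr i => (a = t₁ ∧ i = 0) ∨ (a = t₂ ∧ i = 1)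
  | Sum.inr i, Sum.inl b => (i = 0 ∧ b = s₁) ∨ (i = 1 ∧ b = s₂)
  | Sum.inr _, Sum.inr _ => False

open Set

lemma Nat.exists_add_modEq {n : ℕ} (hn : 0 < n) (k j : ℕ) : ∃ i, k + i ≡ j [MOD n] := by
  obtain ⟨n, rfl⟩ : ∃ n', n = n' + 1 := ⟨n - 1, by omega⟩
  refine ⟨j + n * k, ?_⟩
  rw [Nat.ModEq, show k + (j + n * k) = j + (n + 1) * k by ring, Nat.add_mul_mod_self_left]

lemma Nat.exists_lt_add_two {m : ℕ} {p : ℕ → Prop} :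
    (∃ i < m + 2, p i) ↔ (∃ i < m, p i) ∨ p m ∨ p (m + 1) := by
  constructor
  · rintro ⟨i, hi, hp⟩
    rcases lt_trichotomy i m with h | rfl | h
    · exact .inl ⟨i, h, hp⟩
    · exact .inr (.inl hp)
    · obtain rfl : i = m + 1 := by omega
      exact .inr (.inr hp)
  · rintro (⟨i, hi, hp⟩ | hp | hp)
    exacts [⟨i, by omega, hp⟩, ⟨m, by omega, hp⟩, ⟨m + 1, by omega, hp⟩]

lemma Nat.Iio_add_two (m : ℕ) : Iio (m + 2) = insert (m + 1) (Iic m) := by ext; simp; omega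

section CyclicSequence

variable {α : Type*} {n : ℕ} {f f' : ℕ → α}

def cycleArc (n : ℕ) (f : ℕ → α) (a b : α) : Prop :=
  ∃ i < n, f i = a ∧ f ((i + 1) % n) = b

def pathArc (m : ℕ) (P : ℕ → α) (a b : α) : Prop :=
  ∃ i < m, P i = a ∧ P (i + 1) = b

lemma mem_image_Iio_iff_exists_mod (hn : 0 < n) {a : α} :
    a ∈ f '' Iio n ↔ ∃ i, f (i % n) = a :=
  ⟨fun ⟨i, hi, ha⟩ => ⟨i, by rwa [Nat.mod_eq_of_lt hi]⟩,
    fun ⟨i, ha⟩ => ⟨i % n, Nat.mod_lt i hn, ha⟩⟩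

lemma cycleArc_iff_exists_mod (hn : 0 < n) {a b : α} :
    cycleArc n f a b ↔ ∃ i, f (i % n) = a ∧ f ((i + 1) % n) = b :=
  ⟨fun ⟨i, hi, ha, hb⟩ => ⟨i, by rwa [Nat.mod_eq_of_lt hi], hb⟩,
    fun ⟨i, ha, hb⟩ => ⟨i % n, Nat.mod_lt i hn, ha, by rwa [Nat.mod_add_mod]⟩⟩

lemma exists_add_iff_of_modEq_invariant (hn : 0 < n) (k : ℕ) (p : ℕ → Prop)
    (hp : ∀ i j, i ≡ j [MOD n] → (p i ↔ p j)) : (∃ i, p (k + i)) ↔ ∃ i, p i :=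
  ⟨fun ⟨i, hi⟩ => ⟨k + i, hi⟩, fun ⟨j, hj⟩ =>
    let ⟨i, hi⟩ := Nat.exists_add_modEq hn k j
    ⟨i, (hp _ _ hi).mpr hj⟩⟩

variable {k : ℕ}

lemma apply_mod_of_rotate (hn : 0 < n) (hf' : ∀ i < n, f' i = f ((k + i) % n)) (i : ℕ) :
    f' (i % n) = f ((k + i) % n) := by
  rw [hf' _ (Nat.mod_lt i hn), Nat.add_mod_mod]

lemma image_Iio_eq_of_rotate (hn : 0 < n) (hf' : ∀ i < n, f' i = f ((k + i) % n)) :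
    f' '' Iio n = f '' Iio n := by
  ext a
  simp only [mem_image_Iio_iff_exists_mod hn, apply_mod_of_rotate hn hf']
  exact exists_add_iff_of_modEq_invariant hn k (fun i => f (i % n) = a) fun i j h => by rw [h]

lemma cycleArc_eq_of_rotate (hn : 0 < n) (hf' : ∀ i < n, f' i = f ((k + i) % n)) :
    cycleArc n f' = cycleArc n f := by
  ext a b
  simp only [cycleArc_iff_exists_mod hn, apply_mod_of_rotate hn hf', ← add_assoc]
  exact exists_add_iff_of_modEq_invariant hn k (fun i => f (i % n) = a ∧ f ((i + 1) % n) = b)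
    fun i j h => by rw [h, Nat.ModEq.add_right 1 h]

lemma injOn_Iio_of_rotate (hn : 0 < n) (hf' : ∀ i < n, f' i = f ((k + i) % n))
    (hinj : InjOn f (Iio n)) : InjOn f' (Iio n) := by
  intro i hi j hj hij
  rw [hf' i hi, hf' j hj] at hij
  have := hinj (Nat.mod_lt _ hn) (Nat.mod_lt _ hn) hij
  exact (Nat.ModEq.add_left_cancel' k this).eq_of_lt_of_lt hi hj

end CyclicSequence

section DiCycle

variable {α β : Type*} {R : α → α → Prop} {n : ℕ}

lemma IsDiCycle.of_map {S : β → β → Prop} {v : ℕ → β} {w : ℕ → α} {φ : α → β}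
    (hφinj : φ.Injective) (hφ : ∀ a b, S (φ a) (φ b) → R a b) (hw : ∀ i ≤ n, v i = φ (w i))
    (h : IsDiCycle S n v) : IsDiCycle R n w := by
  obtain ⟨hn, hv, hinj, harc⟩ := h
  refine ⟨hn, ?_, fun i hi j hj hij => hinj i hi j hj ?_, fun i hi => hφ _ _ ?_⟩
  · exact hφinj (by rw [← hw n le_rfl, ← hw 0 (Nat.zero_le n), hv])
  · rw [hw i hi.le, hw j hj.le, hij]
  · rw [← hw i hi.le, ← hw (i + 1) hi]
    exact harc i hi

lemma IsDiCycle.exists_inr {S : α ⊕ β → α ⊕ β → Prop} {v : ℕ → α ⊕ β}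
    (hS : ∀ a b, S (.inl a) (.inl b) → R a b) (hR : ¬∃ n w, IsDiCycle R n w)
    (h : IsDiCycle S n v) : ∃ i < n, ∃ e, v i = .inr e := by
  by_contra! hv
  have hn : 0 < n := by have := h.1; omega
  have hinl : ∀ i < n, ∃ a, v i = .inl a := fun i hi => by
    rcases hvi : v i with a | e
    exacts [⟨a, rfl⟩, absurd hvi (hv i hi e)]
  obtain ⟨a₀, -⟩ := hinl 0 hn
  refine hR ⟨n, fun i => (v i).elim id fun _ => a₀, h.of_map Sum.inl_injective hS fun i hi => ?_⟩
  obtain ⟨a, ha⟩ : ∃ a, v i = .inl a := by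
    rcases hi.lt_or_eq with hi | rfl
    · exact hinl i hi
    · rw [h.2.1]
      exact hinl 0 hn
  simp [ha]

end DiCycle

section InducedPairs

variable {α : Type*}

def InducedUnion (R : α → α → Prop) (S₁ S₂ : Set α) (A₁ A₂ : α → α → Prop) : Prop :=
  ∀ a b, a ∈ S₁ ∪ S₂ → b ∈ S₁ ∪ S₂ → (R a b ↔ A₁ a b ∨ A₂ a b)

def IsInducedCyclePair (R : α → α → Prop) (n₁ n₂ : ℕ) (f g : ℕ → α) : Prop :=
  2 ≤ n₁ ∧ 2 ≤ n₂ ∧ f n₁ = f 0 ∧ g n₂ = g 0 ∧ InjOn f (Iio n₁) ∧ InjOn g (Iio n₂) ∧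
    (∀ i < n₁, ∀ j < n₂, f i ≠ g j) ∧
    InducedUnion R (f '' Iio n₁) (g '' Iio n₂) (cycleArc n₁ f) (cycleArc n₂ g)

def IsInducedPathPair (R : α → α → Prop) (s₁ t₁ s₂ t₂ : α) (m₁ m₂ : ℕ) (P₁ P₂ : ℕ → α) :
    Prop :=
  P₁ 0 = s₁ ∧ P₁ m₁ = t₁ ∧ P₂ 0 = s₂ ∧ P₂ m₂ = t₂ ∧ InjOn P₁ (Iic m₁) ∧ InjOn P₂ (Iic m₂) ∧
    (∀ i < m₁, R (P₁ i) (P₁ (i + 1))) ∧ (∀ i < m₂, R (P₂ i) (P₂ (i + 1))) ∧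
    (∀ i ≤ m₁, ∀ j ≤ m₂, P₁ i ≠ P₂ j) ∧
    InducedUnion R (P₁ '' Iic m₁) (P₂ '' Iic m₂) (pathArc m₁ P₁) (pathArc m₂ P₂)

lemma InducedUnion.symm {R A₁ A₂ : α → α → Prop} {S₁ S₂ : Set α}
    (h : InducedUnion R S₁ S₂ A₁ A₂) : InducedUnion R S₂ S₁ A₂ A₁ := fun a b ha hb =>
  (h a b (by rwa [union_comm]) (by rwa [union_comm])).trans or_comm

lemma InducedUnion.rel_of_pathArc {R A₂ : α → α → Prop} {S₂ : Set α} {m : ℕ} {P : ℕ → α}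
    (h : InducedUnion R (P '' Iic m) S₂ (pathArc m P) A₂) : ∀ i < m, R (P i) (P (i + 1)) :=
  fun i hi => (h _ _ (.inl ⟨i, hi.le, rfl⟩) (.inl ⟨i + 1, hi, rfl⟩)).mpr (.inl ⟨i, hi, rfl, rfl⟩)

namespace IsInducedCyclePair

variable {R : α → α → Prop} {n₁ n₂ : ℕ} {f g : ℕ → α}

lemma symm (h : IsInducedCyclePair R n₁ n₂ f g) : IsInducedCyclePair R n₂ n₁ g f :=
  let ⟨hn₁, hn₂, hf, hg, hfinj, hginj, hdisj, hI⟩ := h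
  ⟨hn₂, hn₁, hg, hf, hginj, hfinj, fun i hi j hj => (hdisj j hj i hi).symm, hI.symm⟩

lemma apply_ne (h : IsInducedCyclePair R n₁ n₂ f g) {i j : ℕ} (hi : i < n₁) (hj : j < n₂) :
    f i ≠ g j :=
  h.2.2.2.2.2.2.1 i hi j hj

lemma isDiCycle_left (h : IsInducedCyclePair R n₁ n₂ f g) : IsDiCycle R n₁ f := by
  obtain ⟨hn₁, -, hf, -, hinj, -, -, hI⟩ := h
  refine ⟨hn₁, hf, hinj, fun i hi => ?_⟩
  have harc := (hI _ _ (.inl ⟨i, hi, rfl⟩) (.inl ⟨_, Nat.mod_lt _ (by omega), rfl⟩)).mpr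
    (.inl ⟨i, hi, rfl, rfl⟩)
  rcases (show i + 1 ≤ n₁ from hi).lt_or_eq with hi' | hi'
  · rwa [Nat.mod_eq_of_lt hi'] at harc
  · rw [hi', Nat.mod_self, ← hf] at harc
    rwa [hi']

lemma of_rotate (h : IsInducedCyclePair R n₁ n₂ f g) {f' g' : ℕ → α} {k₁ k₂ : ℕ}
    (hf' : ∀ i < n₁, f' i = f ((k₁ + i) % n₁)) (hg' : ∀ i < n₂, g' i = g ((k₂ + i) % n₂))
    (hf'₀ : f' n₁ = f' 0) (hg'₀ : g' n₂ = g' 0) : IsInducedCyclePair R n₁ n₂ f' g' := by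
  obtain ⟨hn₁, hn₂, -, -, hfinj, hginj, hdisj, hI⟩ := h
  have hn₁' : 0 < n₁ := by omega
  have hn₂' : 0 < n₂ := by omega
  refine ⟨hn₁, hn₂, hf'₀, hg'₀, injOn_Iio_of_rotate hn₁' hf' hfinj,
    injOn_Iio_of_rotate hn₂' hg' hginj, fun i hi j hj => ?_, ?_⟩
  · rw [hf' i hi, hg' j hj]
    exact hdisj _ (Nat.mod_lt _ hn₁') _ (Nat.mod_lt _ hn₂')
  · rwa [image_Iio_eq_of_rotate hn₁' hf', image_Iio_eq_of_rotate hn₂' hg',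
      cycleArc_eq_of_rotate hn₁' hf', cycleArc_eq_of_rotate hn₂' hg']

lemma exists_inl_of_ne {β : Type*} {R : α ⊕ β → α ⊕ β → Prop} {f g : ℕ → α ⊕ β} {u v : β}
    (h : IsInducedCyclePair R n₁ n₂ f g) (huv : ∀ e, e = u ∨ e = v) {k₁ k₂ : ℕ}
    (hk₁ : k₁ < n₁) (hf : f k₁ = .inr u) (hk₂ : k₂ < n₂) (hg : g k₂ = .inr v) :
    ∀ i < n₁, i ≠ k₁ → ∃ a, f i = .inl a := by
  obtain ⟨-, -, -, -, hinj, -, hdisj, -⟩ := h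
  intro i hi hik
  rcases hfi : f i with a | e
  · exact ⟨a, rfl⟩
  · rcases huv e with rfl | rfl
    · exact absurd (hinj hi hk₁ (hfi.trans hf.symm)) hik
    · exact absurd (hfi.trans hg.symm) (hdisj i hi k₂ hk₂)

end IsInducedCyclePair

end InducedPairs

section CloseByInr

variable {α β : Type*} (P : ℕ → α) (m : ℕ) (u : β)

-- Past index `m + 1` only the value at `m + 2` matters: it closes the cycle up.
def closeByInr : ℕ → α ⊕ β := fun i =>
  if i ≤ m then .inl (P i) else if i = m + 1 then .inr u else .inl (P 0)

variable {P m u}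

lemma closeByInr_of_le {i : ℕ} (hi : i ≤ m) : closeByInr P m u i = .inl (P i) := if_pos hi

@[simp] lemma closeByInr_add_one : closeByInr P m u (m + 1) = .inr u := by simp [closeByInr]

@[simp] lemma closeByInr_add_two : closeByInr P m u (m + 2) = closeByInr P m u 0 := by
  simp [closeByInr]

lemma closeByInr_of_lt_add_two {i : ℕ} (hi : i < m + 2) :
    (i ≤ m ∧ closeByInr P m u i = .inl (P i)) ∨ (i = m + 1 ∧ closeByInr P m u i = .inr u) := by
  by_cases h : i ≤ m
  · exact .inl ⟨h, closeByInr_of_le h⟩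
  · obtain rfl : i = m + 1 := by omega
    exact .inr ⟨rfl, closeByInr_add_one⟩

lemma eqOn_closeByInr : EqOn (closeByInr P m u) (.inl ∘ P) (Iic m) :=
  fun _ hi => closeByInr_of_le hi

lemma image_closeByInr :
    closeByInr P m u '' Iio (m + 2) = insert (.inr u) (.inl '' (P '' Iic m)) := by
  rw [Nat.Iio_add_two m, image_insert_eq, closeByInr_add_one, eqOn_closeByInr.image_eq, image_comp]

lemma injOn_closeByInr_iff : InjOn (closeByInr P m u) (Iio (m + 2)) ↔ InjOn P (Iic m) := by
  rw [Nat.Iio_add_two m, injOn_insert (by simp), eqOn_closeByInr.injOn_iff,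
    eqOn_closeByInr.image_eq, closeByInr_add_one]
  exact ⟨fun h => h.1.of_comp, fun h => ⟨Sum.inl_injective.comp_injOn h, by simp⟩⟩

lemma forall_closeByInr_ne_iff {P₁ P₂ : ℕ → α} {m₁ m₂ : ℕ} {u₁ u₂ : β} (hu : u₁ ≠ u₂) :
    (∀ i < m₁ + 2, ∀ j < m₂ + 2, closeByInr P₁ m₁ u₁ i ≠ closeByInr P₂ m₂ u₂ j) ↔
      ∀ i ≤ m₁, ∀ j ≤ m₂, P₁ i ≠ P₂ j := by
  refine ⟨fun h i hi j hj he => h i (by omega) j (by omega) ?_, fun h i hi j hj => ?_⟩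
  · rw [closeByInr_of_le hi, closeByInr_of_le hj, he]
  rcases closeByInr_of_lt_add_two (P := P₁) (u := u₁) hi with ⟨hi, h₁⟩ | ⟨-, h₁⟩ <;>
    rcases closeByInr_of_lt_add_two (P := P₂) (u := u₂) hj with ⟨hj, h₂⟩ | ⟨-, h₂⟩ <;>
    rw [h₁, h₂]
  · simpa using h i hi j hj
  · simp
  · simp
  · simpa using hu

lemma exists_closeByInr_eq_rotate {f : ℕ → α ⊕ β} {k : ℕ} (hk : k < m + 2)
    (hfk : f k = .inr u) (hinl : ∀ i < m + 2, i ≠ k → ∃ a, f i = .inl a) :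
    ∃ P : ℕ → α, ∀ i < m + 2, closeByInr P m u i = f ((k + 1 + i) % (m + 2)) := by
  have hne : ∀ i ≤ m, (k + 1 + i) % (m + 2) ≠ k := by
    intro i hi h
    have : k + (i + 1) ≡ k + 0 [MOD m + 2] := by
      rw [Nat.ModEq, ← add_assoc, add_right_comm, h, add_zero, Nat.mod_eq_of_lt hk]
    have := (Nat.ModEq.add_left_cancel' k this).eq_of_lt_of_lt (by omega) (by omega)
    omega
  have hinl' : ∀ i ≤ m, ∃ a, f ((k + 1 + i) % (m + 2)) = .inl a := fun i hi =>
    hinl _ (Nat.mod_lt _ (by omega)) (hne i hi)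
  obtain ⟨a₀, -⟩ := hinl' 0 (Nat.zero_le m)
  refine ⟨fun i => (f ((k + 1 + i) % (m + 2))).elim id fun _ => a₀, fun i hi => ?_⟩
  rcases closeByInr_of_lt_add_two (P := fun _ => a₀) (u := u) hi with ⟨hi, -⟩ | ⟨rfl, -⟩
  · obtain ⟨a, ha⟩ := hinl' i hi
    rw [closeByInr_of_le hi, ha]
    rfl
  · rw [closeByInr_add_one, show k + 1 + (m + 1) = k + (m + 2) by ring, Nat.add_mod_right,
      Nat.mod_eq_of_lt hk, hfk]

lemma cycleArc_closeByInr {x y : α ⊕ β} :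
    cycleArc (m + 2) (closeByInr P m u) x y ↔
      (∃ i < m, .inl (P i) = x ∧ .inl (P (i + 1)) = y) ∨
        (.inl (P m) = x ∧ .inr u = y) ∨ (.inr u = x ∧ .inl (P 0) = y) := by
  simp only [cycleArc, Nat.exists_lt_add_two]
  refine or_congr (exists_congr fun i => and_congr_right fun hi => ?_) (or_congr ?_ ?_)
  · rw [closeByInr_of_le hi.le, Nat.mod_eq_of_lt (by omega), closeByInr_of_le hi]
  · rw [closeByInr_of_le le_rfl, Nat.mod_eq_of_lt (by omega), closeByInr_add_one]
  · rw [closeByInr_add_one, Nat.mod_self, closeByInr_of_le (Nat.zero_le m)]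

@[simp] lemma cycleArc_closeByInr_inl_inl {a b : α} :
    cycleArc (m + 2) (closeByInr P m u) (.inl a) (.inl b) ↔ pathArc m P a b := by
  simp [cycleArc_closeByInr, pathArc]

@[simp] lemma cycleArc_closeByInr_inl_inr {a : α} {v : β} :
    cycleArc (m + 2) (closeByInr P m u) (.inl a) (.inr v) ↔ P m = a ∧ u = v := by
  simp [cycleArc_closeByInr]

@[simp] lemma cycleArc_closeByInr_inr_inl {v : β} {b : α} :
    cycleArc (m + 2) (closeByInr P m u) (.inr v) (.inl b) ↔ u = v ∧ P 0 = b := by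
  simp [cycleArc_closeByInr]

@[simp] lemma not_cycleArc_closeByInr_inr_inr {v w : β} :
    ¬ cycleArc (m + 2) (closeByInr P m u) (.inr v) (.inr w) := by
  simp [cycleArc_closeByInr]

end CloseByInr

section Hrel

variable {V : Type*} {G : V → V → Prop} {s₁ t₁ s₂ t₂ : V} {m₁ m₂ : ℕ} {P₁ P₂ : ℕ → V}

lemma inducedUnion_closeByInr_iff :
    InducedUnion (Hrel G s₁ t₁ s₂ t₂)
        (closeByInr P₁ m₁ 0 '' Iio (m₁ + 2)) (closeByInr P₂ m₂ 1 '' Iio (m₂ + 2))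
        (cycleArc (m₁ + 2) (closeByInr P₁ m₁ 0)) (cycleArc (m₂ + 2) (closeByInr P₂ m₂ 1)) ↔
      (P₁ 0 = s₁ ∧ P₁ m₁ = t₁ ∧ P₂ 0 = s₂ ∧ P₂ m₂ = t₂) ∧
        InducedUnion G (P₁ '' Iic m₁) (P₂ '' Iic m₂) (pathArc m₁ P₁) (pathArc m₂ P₂) := by
  have hmem {a : V} : .inl a ∈ closeByInr P₁ m₁ 0 '' Iio (m₁ + 2) ∪
      closeByInr P₂ m₂ (1 : Fin 2) '' Iio (m₂ + 2) ↔ a ∈ P₁ '' Iic m₁ ∪ P₂ '' Iic m₂ := by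
    simp [image_closeByInr]
  have hmem₁ {i : ℕ} (hi : i ≤ m₁) := hmem.mpr (.inl ⟨i, hi, rfl⟩)
  have hmem₂ {i : ℕ} (hi : i ≤ m₂) := hmem.mpr (.inr ⟨i, hi, rfl⟩)
  constructor
  · intro h
    have hs₁ := h (.inr 0) _ (by simp [image_closeByInr]) (hmem₁ (Nat.zero_le _))
    have ht₁ := h _ (.inr 0) (hmem₁ le_rfl) (by simp [image_closeByInr])
    have hs₂ := h (.inr 1) _ (by simp [image_closeByInr]) (hmem₂ (Nat.zero_le _))
    have ht₂ := h _ (.inr 1) (hmem₂ le_rfl) (by simp [image_closeByInr])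
    simp only [Hrel, cycleArc_closeByInr_inr_inl, cycleArc_closeByInr_inl_inr] at hs₁ ht₁ hs₂ ht₂
    refine ⟨⟨by simpa using hs₁, by simpa using ht₁, by simpa using hs₂, by simpa using ht₂⟩,
      fun a b ha hb => by simpa [Hrel] using h (.inl a) (.inl b) (hmem.mpr ha) (hmem.mpr hb)⟩
  · rintro ⟨⟨rfl, rfl, rfl, rfl⟩, h⟩ (a | e) (b | e') ha hb
    · simpa [Hrel] using h a b (hmem.mp ha) (hmem.mp hb)
    · fin_cases e' <;> simp [Hrel, eq_comm]
    · fin_cases e <;> simp [Hrel, eq_comm]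
    · simp [Hrel]

lemma isInducedCyclePair_closeByInr_iff :
    IsInducedCyclePair (Hrel G s₁ t₁ s₂ t₂) (m₁ + 2) (m₂ + 2)
        (closeByInr P₁ m₁ 0) (closeByInr P₂ m₂ 1) ↔
      IsInducedPathPair G s₁ t₁ s₂ t₂ m₁ m₂ P₁ P₂ := by
  simp only [IsInducedCyclePair, IsInducedPathPair, injOn_closeByInr_iff,
    forall_closeByInr_ne_iff (show (0 : Fin 2) ≠ 1 by decide), inducedUnion_closeByInr_iff,
    closeByInr_add_two, le_add_iff_nonneg_left, zero_le, true_and, and_assoc]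
  constructor
  · rintro ⟨hinj₁, hinj₂, hdisj, hs₁, ht₁, hs₂, ht₂, hI⟩
    exact ⟨hs₁, ht₁, hs₂, ht₂, hinj₁, hinj₂, hI.rel_of_pathArc, hI.symm.rel_of_pathArc, hdisj, hI⟩
  · rintro ⟨hs₁, ht₁, hs₂, ht₂, hinj₁, hinj₂, -, -, hdisj, hI⟩
    exact ⟨hinj₁, hinj₂, hdisj, hs₁, ht₁, hs₂, ht₂, hI⟩

variable {n₁ n₂ k₁ k₂ : ℕ} {f g : ℕ → V ⊕ Fin 2}

lemma IsInducedCyclePair.exists_isInducedPathPair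
    (h : IsInducedCyclePair (Hrel G s₁ t₁ s₂ t₂) n₁ n₂ f g)
    (hk₁ : k₁ < n₁) (hf : f k₁ = .inr 0) (hk₂ : k₂ < n₂) (hg : g k₂ = .inr 1) :
    ∃ m₁ m₂ P₁ P₂, IsInducedPathPair G s₁ t₁ s₂ t₂ m₁ m₂ P₁ P₂ := by
  obtain ⟨m₁, rfl⟩ : ∃ m, n₁ = m + 2 := ⟨n₁ - 2, by have := h.1; omega⟩
  obtain ⟨m₂, rfl⟩ : ∃ m, n₂ = m + 2 := ⟨n₂ - 2, by have := h.2.1; omega⟩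
  obtain ⟨P₁, hP₁⟩ :=
    exists_closeByInr_eq_rotate hk₁ hf (h.exists_inl_of_ne (by decide) hk₁ hf hk₂ hg)
  obtain ⟨P₂, hP₂⟩ :=
    exists_closeByInr_eq_rotate hk₂ hg (h.symm.exists_inl_of_ne (by decide) hk₂ hg hk₁ hf)
  exact ⟨m₁, m₂, P₁, P₂, isInducedCyclePair_closeByInr_iff.mp
    (h.of_rotate hP₁ hP₂ closeByInr_add_two closeByInr_add_two)⟩

lemma IsInducedCyclePair.exists_isInducedPathPair_of_acyclic
    (hG : ¬∃ n v, IsDiCycle G n v) (h : IsInducedCyclePair (Hrel G s₁ t₁ s₂ t₂) n₁ n₂ f g) :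
    ∃ m₁ m₂ P₁ P₂, IsInducedPathPair G s₁ t₁ s₂ t₂ m₁ m₂ P₁ P₂ := by
  obtain ⟨k₁, hk₁, e₁, hf⟩ := h.isDiCycle_left.exists_inr (fun _ _ => id) hG
  obtain ⟨k₂, hk₂, e₂, hg⟩ := h.symm.isDiCycle_left.exists_inr (fun _ _ => id) hG
  fin_cases e₁ <;> fin_cases e₂
  · exact absurd (hf.trans hg.symm) (h.apply_ne hk₁ hk₂)
  · exact h.exists_isInducedPathPair hk₁ hf hk₂ hg
  · exact h.symm.exists_isInducedPathPair hk₂ hg hk₁ hf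
  · exact absurd (hf.trans hg.symm) (h.apply_ne hk₁ hk₂)

end Hrel

theorem stmt17_general {V : Type*} (G : V → V → Prop)
    (hacyclic : ¬ ∃ n v, IsDiCycle G n v)
    (s₁ t₁ s₂ t₂ : V) :
    (∃ (n₁ n₂ : ℕ) (f g : ℕ → V ⊕ Fin 2),
      2 ≤ n₁ ∧ 2 ≤ n₂ ∧ f n₁ = f 0 ∧ g n₂ = g 0 ∧
      (∀ i < n₁, ∀ j < n₁, f i = f j → i = j) ∧
      (∀ i < n₂, ∀ j < n₂, g i = g j → i = j) ∧
      (∀ i < n₁, ∀ j < n₂, f i ≠ g j) ∧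
      (∀ a b : V ⊕ Fin 2,
        ((∃ i < n₁, f i = a) ∨ (∃ i < n₂, g i = a)) →
        ((∃ i < n₁, f i = b) ∨ (∃ i < n₂, g i = b)) →
        (Hrel G s₁ t₁ s₂ t₂ a b ↔
          ((∃ i < n₁, f i = a ∧ f ((i + 1) % n₁) = b) ∨
            (∃ i < n₂, g i = a ∧ g ((i + 1) % n₂) = b))))) ↔
    (∃ (m₁ m₂ : ℕ) (P₁ P₂ : ℕ → V),
      P₁ 0 = s₁ ∧ P₁ m₁ = t₁ ∧ P₂ 0 = s₂ ∧ P₂ m₂ = t₂ ∧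
      (∀ i ≤ m₁, ∀ j ≤ m₁, P₁ i = P₁ j → i = j) ∧
      (∀ i ≤ m₂, ∀ j ≤ m₂, P₂ i = P₂ j → i = j) ∧
      (∀ i < m₁, G (P₁ i) (P₁ (i + 1))) ∧
      (∀ i < m₂, G (P₂ i) (P₂ (i + 1))) ∧
      (∀ i ≤ m₁, ∀ j ≤ m₂, P₁ i ≠ P₂ j) ∧
      (∀ a b : V,
        ((∃ i ≤ m₁, P₁ i = a) ∨ (∃ i ≤ m₂, P₂ i = a)) →
        ((∃ i ≤ m₁, P₁ i = b) ∨ (∃ i ≤ m₂, P₂ i = b)) →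
        (G a b ↔
          ((∃ i < m₁, P₁ i = a ∧ P₁ (i + 1) = b) ∨
            (∃ i < m₂, P₂ i = a ∧ P₂ (i + 1) = b))))) := by
  constructor
  · rintro ⟨n₁, n₂, f, g, h⟩
    exact IsInducedCyclePair.exists_isInducedPathPair_of_acyclic hacyclic h
  · rintro ⟨m₁, m₂, P₁, P₂, h⟩
    exact ⟨_, _, _, _, isInducedCyclePair_closeByInr_iff.mpr h⟩

/-- Let `G` be an acyclic digraph with distinct vertices `s₁, t₁, s₂, t₂` and let `H` be
obtained from `G` by adding new vertices `u₁, u₂` and the arcs `t₁u₁, u₁s₁, t₂u₂, u₂s₂`.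
Then `H` contains, as an induced subdigraph, the disjoint union of two directed cycles with
no arcs between them if and only if `G` contains directed paths `P₁` from `s₁` to `t₁` and
`P₂` from `s₂` to `t₂` such that the subdigraph of `G` induced by `V(P₁) ∪ V(P₂)` is exactly
the disjoint union of `P₁` and `P₂`. -/
theorem stmt17 {V : Type*} (G : V → V → Prop)
    (hacyclic : ¬ ∃ n v, IsDiCycle G n v)
    (s₁ t₁ s₂ t₂ : V)
    (hd₁ : s₁ ≠ t₁) (hd₂ : s₁ ≠ s₂) (hd₃ : s₁ ≠ t₂) (hd₄ : t₁ ≠ s₂) (hd₅ : t₁ ≠ t₂)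
    (hd₆ : s₂ ≠ t₂) :
    (∃ (n₁ n₂ : ℕ) (f g : ℕ → V ⊕ Fin 2),
      2 ≤ n₁ ∧ 2 ≤ n₂ ∧ f n₁ = f 0 ∧ g n₂ = g 0 ∧
      (∀ i < n₁, ∀ j < n₁, f i = f j → i = j) ∧
      (∀ i < n₂, ∀ j < n₂, g i = g j → i = j) ∧
      (∀ i < n₁, ∀ j < n₂, f i ≠ g j) ∧
      (∀ a b : V ⊕ Fin 2,
        ((∃ i < n₁, f i = a) ∨ (∃ i < n₂, g i = a)) →
        ((∃ i < n₁, f i = b) ∨ (∃ i < n₂, g i = b)) →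
        (Hrel G s₁ t₁ s₂ t₂ a b ↔
          ((∃ i < n₁, f i = a ∧ f ((i + 1) % n₁) = b) ∨
            (∃ i < n₂, g i = a ∧ g ((i + 1) % n₂) = b))))) ↔
    (∃ (m₁ m₂ : ℕ) (P₁ P₂ : ℕ → V),
      P₁ 0 = s₁ ∧ P₁ m₁ = t₁ ∧ P₂ 0 = s₂ ∧ P₂ m₂ = t₂ ∧
      (∀ i ≤ m₁, ∀ j ≤ m₁, P₁ i = P₁ j → i = j) ∧
      (∀ i ≤ m₂, ∀ j ≤ m₂, P₂ i = P₂ j → i = j) ∧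
      (∀ i < m₁, G (P₁ i) (P₁ (i + 1))) ∧
      (∀ i < m₂, G (P₂ i) (P₂ (i + 1))) ∧
      (∀ i ≤ m₁, ∀ j ≤ m₂, P₁ i ≠ P₂ j) ∧
      (∀ a b : V,
        ((∃ i ≤ m₁, P₁ i = a) ∨ (∃ i ≤ m₂, P₂ i = a)) →
        ((∃ i ≤ m₁, P₁ i = b) ∨ (∃ i ≤ m₂, P₂ i = b)) →
        (G a b ↔
          ((∃ i < m₁, P₁ i = a ∧ P₁ (i + 1) = b) ∨
            (∃ i < m₂, P₂ i = a ∧ P₂ (i + 1) = b))))) :=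
  stmt17_general G hacyclic s₁ t₁ s₂ t₂
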